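/- arXiv:2410.02695 — 6 statements merged into one kernel-verified Lean document; each statement's English description precedes it below -/
import Mathlib

section
/- For any two finite simple graphs G₁ and G₂, each with at least one vertex, the chromatic number of their Cartesian product satisfies χ(G₁ □ G₂) = max(χ(G₁), χ(G₂)). -/
/-!
Each factor embeds in `G₁ □ G₂` as a fibre, giving the lower bound. Conversely, given colourings
`c₁, c₂` of the factors with values in a group, `(a, b) ↦ c₁ a + c₂ b` is a proper colouring of
the product: along an edge one coordinate is fixed, so cancellation reduces properness to that of
`c₁` or `c₂`.
-/

namespace SimpleGraph

variable {V W α : Type*} {G₁ : SimpleGraph V} {G₂ : SimpleGraph W}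

def Coloring.boxProd [AddGroup α] (c₁ : G₁.Coloring α) (c₂ : G₂.Coloring α) :
    (G₁ □ G₂).Coloring α :=
  Coloring.mk (fun p => c₁ p.1 + c₂ p.2) <| by
    rintro ⟨a₁, b₁⟩ ⟨a₂, b₂⟩ (⟨ha, rfl⟩ | ⟨hb, rfl⟩)
    · exact fun h => c₁.valid ha (add_right_cancel h)
    · exact fun h => c₂.valid hb (add_left_cancel h)

theorem Colorable.boxProd {n : ℕ} (h₁ : G₁.Colorable n) (h₂ : G₂.Colorable n) :
    (G₁ □ G₂).Colorable n := by
  cases n with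
  | zero =>
    have : IsEmpty V := colorable_zero_iff.mp h₁
    exact .of_isEmpty 0
  | succ n => exact ⟨h₁.some.boxProd h₂.some⟩

theorem chromaticNumber_le_boxProd_left [Nonempty W] :
    G₁.chromaticNumber ≤ (G₁ □ G₂).chromaticNumber :=
  chromaticNumber_mono_of_hom (G₁.boxProdLeft G₂ (Classical.arbitrary W)).toHom

theorem chromaticNumber_le_boxProd_right [Nonempty V] :
    G₂.chromaticNumber ≤ (G₁ □ G₂).chromaticNumber :=
  chromaticNumber_mono_of_hom (G₁.boxProdRight G₂ (Classical.arbitrary V)).toHom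

end SimpleGraph

theorem stmt_2_general {V W : Type*} [Nonempty V] [Nonempty W]
    (G₁ : SimpleGraph V) (G₂ : SimpleGraph W) :
    (G₁.boxProd G₂).chromaticNumber = max G₁.chromaticNumber G₂.chromaticNumber := by
  refine eq_max SimpleGraph.chromaticNumber_le_boxProd_left
    SimpleGraph.chromaticNumber_le_boxProd_right fun {d} h₁ h₂ => ?_
  cases d with
  | top => exact le_top
  | coe n =>
    rw [SimpleGraph.chromaticNumber_le_iff_colorable] at h₁ h₂ ⊢
    exact h₁.boxProd h₂

/-- Sabidussi: the chromatic number of a Cartesian (box) product is the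
maximum of the chromatic numbers of the factors. -/
theorem stmt_2 {V W : Type*} [Fintype V] [Fintype W] [Nonempty V] [Nonempty W]
    (G₁ : SimpleGraph V) (G₂ : SimpleGraph W) :
    (G₁.boxProd G₂).chromaticNumber = max G₁.chromaticNumber G₂.chromaticNumber :=
  stmt_2_general G₁ G₂
end

section
/- Let G be a finite graph with a vertex ordering v₁, …, vₙ, and for each vertex v let deg⁺(v) be the number of neighbours of v with larger index. Suppose every vertex v has a list L(v) of exactly deg⁺(v) + 2 colours. Then there exists a probability distribution on proper L-colourings c of G such that for every vertex v and every colour x ∈ L(v), the probability that c(v) = x is at least 2^{−(deg⁺(v)+1)}. -/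
open Finset

noncomputable def pick5 (s : Finset ℕ) : ℕ := if h : s.Nonempty then h.choose else 0

lemma pick5_mem {s : Finset ℕ} (h : s.Nonempty) : pick5 s ∈ s := by
  rw [pick5, dif_pos h]; exact h.choose_spec

lemma erase_ne5 {s : Finset ℕ} {a : ℕ} (h : 2 ≤ s.card) : (s.erase a).Nonempty := by
  rcases em (a ∈ s) with hm | hm
  · rw [← Finset.card_pos, Finset.card_erase_of_mem hm]; omega
  · rw [Finset.erase_eq_of_notMem hm, ← Finset.card_pos]; omega

theorem aux5 (n : ℕ) : ∀ (G : SimpleGraph (Fin n)) [DecidableRel G.Adj]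
    (L : Fin n → Finset ℕ),
    (∀ v, (L v).card = (Finset.univ.filter (fun u => G.Adj v u ∧ v < u)).card + 2) →
    ∃ (S : Finset (Fin n → ℕ)) (w : (Fin n → ℕ) → ℝ),
      (∀ c ∈ S, (∀ v, c v ∈ L v) ∧ ∀ u v, G.Adj u v → c u ≠ c v) ∧
      (∀ c ∈ S, 0 ≤ w c) ∧ (∑ c ∈ S, w c = 1) ∧
      (∀ v, ∀ x ∈ L v,
        ((1 : ℝ)/2) ^ ((Finset.univ.filter (fun u => G.Adj v u ∧ v < u)).card + 1)
          ≤ ∑ c ∈ S.filter (fun c => c v = x), w c) := by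
  induction n with
  | zero =>
    intro G _ L hL
    refine ⟨{fun _ => 0}, fun _ => 1, ?_, ?_, ?_, ?_⟩
    · intro c _; exact ⟨fun v => v.elim0, fun u => u.elim0⟩
    · intro c _; norm_num
    · simp
    · intro v; exact v.elim0
  | succ n ih =>
    intro G _ L hL
    -- the last vertex has no forward neighbours
    have hfl : (univ.filter (fun u => G.Adj (Fin.last n) u ∧ Fin.last n < u)) = ∅ := by
      apply filter_eq_empty_iff.2
      intro u _
      rintro ⟨-, h⟩
      exact absurd h (not_lt.2 (Fin.le_last u))
    have hcard2l : (L (Fin.last n)).card = 2 := by rw [hL (Fin.last n), hfl]; simp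
    obtain ⟨y₁, y₂, hyne, hyset⟩ := Finset.card_eq_two.1 hcard2l
    -- restricted graph
    let G' : SimpleGraph (Fin n) := G.comap Fin.castSucc
    haveI : DecidableRel G'.Adj := fun a b => ‹DecidableRel G.Adj› _ _
    -- degree relation
    have hdeg : ∀ u : Fin n,
        (univ.filter (fun w => G.Adj u.castSucc w ∧ u.castSucc < w)).card
        = (univ.filter (fun w => G'.Adj u w ∧ u < w)).card
          + (if G.Adj (Fin.last n) u.castSucc then 1 else 0) := by
      intro u
      rw [Finset.card_filter, Finset.card_filter, Fin.sum_univ_castSucc]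
      congr 1
      · refine Finset.sum_congr rfl fun w _ => ?_
        have h1 : (G.Adj u.castSucc w.castSucc ∧ u.castSucc < w.castSucc) ↔
            (G'.Adj u w ∧ u < w) := by
          simp [G', Fin.castSucc_lt_castSucc_iff]
        simp only [h1]
      · have h2 : u.castSucc < Fin.last n := Fin.castSucc_lt_last u
        by_cases hadj : G.Adj (Fin.last n) u.castSucc
        · simp [h2, hadj, hadj.symm]
        · have : ¬ G.Adj u.castSucc (Fin.last n) := fun h => hadj h.symm
          simp [this, hadj]
    have hcard2 : ∀ u : Fin n, 2 ≤ (L u.castSucc).card := by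
      intro u; rw [hL u.castSucc]; omega
    -- the elements removed from neighbours' lists in the two branches
    set r₁ : Fin n → ℕ := fun u =>
      if y₁ ∈ L u.castSucc then y₁ else pick5 ((L u.castSucc).erase y₂) with hr₁def
    set r₂ : Fin n → ℕ := fun u =>
      if y₂ ∈ L u.castSucc then y₂ else pick5 ((L u.castSucc).erase (r₁ u)) with hr₂def
    have hr₁mem : ∀ u, r₁ u ∈ L u.castSucc := by
      intro u
      rw [hr₁def]
      by_cases h : y₁ ∈ L u.castSucc
      · simpa [h]
      · simp only [h, if_false]
        exact Finset.mem_of_mem_erase (pick5_mem (erase_ne5 (hcard2 u)))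
    have hr₂mem : ∀ u, r₂ u ∈ L u.castSucc := by
      intro u
      rw [hr₂def]
      by_cases h : y₂ ∈ L u.castSucc
      · simpa [h]
      · simp only [h, if_false]
        exact Finset.mem_of_mem_erase (pick5_mem (erase_ne5 (hcard2 u)))
    have hrne : ∀ u, r₁ u ≠ r₂ u := by
      intro u
      by_cases h2 : y₂ ∈ L u.castSucc
      · rw [hr₂def]; simp only [h2, if_true]
        by_cases h1 : y₁ ∈ L u.castSucc
        · rw [hr₁def]; simp only [h1, if_true]; exact hyne
        · rw [hr₁def]; simp only [h1, if_false]
          exact Finset.ne_of_mem_erase (pick5_mem (erase_ne5 (hcard2 u)))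
      · rw [hr₂def]; simp only [h2, if_false]
        exact fun h => (Finset.ne_of_mem_erase (pick5_mem (erase_ne5 (hcard2 u)))) h.symm
    have hy₁not : ∀ u, y₁ ∉ (L u.castSucc).erase (r₁ u) := by
      intro u hy
      have hmem := Finset.mem_of_mem_erase hy
      have : r₁ u = y₁ := by rw [hr₁def]; simp [hmem]
      exact (Finset.ne_of_mem_erase hy) this.symm
    have hy₂not : ∀ u, y₂ ∉ (L u.castSucc).erase (r₂ u) := by
      intro u hy
      have hmem := Finset.mem_of_mem_erase hy
      have : r₂ u = y₂ := by rw [hr₂def]; simp [hmem]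
      exact (Finset.ne_of_mem_erase hy) this.symm
    -- lists for the two branches
    set L₁ : Fin n → Finset ℕ := fun u =>
      if G.Adj (Fin.last n) u.castSucc then (L u.castSucc).erase (r₁ u) else L u.castSucc
      with hL₁def
    set L₂ : Fin n → Finset ℕ := fun u =>
      if G.Adj (Fin.last n) u.castSucc then (L u.castSucc).erase (r₂ u) else L u.castSucc
      with hL₂def
    have hL₁c : ∀ u, (L₁ u).card = (univ.filter (fun w => G'.Adj u w ∧ u < w)).card + 2 := by
      intro u
      have hd := hdeg u
      by_cases hadj : G.Adj (Fin.last n) u.castSucc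
      · rw [if_pos hadj] at hd
        simp only [hL₁def, hadj, if_true]
        rw [Finset.card_erase_of_mem (hr₁mem u), hL u.castSucc, hd]; omega
      · rw [if_neg hadj] at hd
        simp only [hL₁def, hadj, if_false]
        rw [hL u.castSucc, hd]
    have hL₂c : ∀ u, (L₂ u).card = (univ.filter (fun w => G'.Adj u w ∧ u < w)).card + 2 := by
      intro u
      have hd := hdeg u
      by_cases hadj : G.Adj (Fin.last n) u.castSucc
      · rw [if_pos hadj] at hd
        simp only [hL₂def, hadj, if_true]
        rw [Finset.card_erase_of_mem (hr₂mem u), hL u.castSucc, hd]; omega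
      · rw [if_neg hadj] at hd
        simp only [hL₂def, hadj, if_false]
        rw [hL u.castSucc, hd]
    obtain ⟨S₁, w₁, hS₁, hw₁, hsum₁, hmar₁⟩ := ih G' L₁ hL₁c
    obtain ⟨S₂, w₂, hS₂, hw₂, hsum₂, hmar₂⟩ := ih G' L₂ hL₂c
    set e₁ : (Fin n → ℕ) → (Fin (n+1) → ℕ) := fun c => Fin.snoc c y₁ with he₁
    set e₂ : (Fin n → ℕ) → (Fin (n+1) → ℕ) := fun c => Fin.snoc c y₂ with he₂
    have hinj : ∀ y : ℕ, Function.Injective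
        (fun c : Fin n → ℕ => (Fin.snoc c y : Fin (n+1) → ℕ)) := by
      intro y a b h
      funext u
      have := congrFun h (Fin.castSucc u)
      simpa using this
    have he₁last : ∀ c, e₁ c (Fin.last n) = y₁ := fun c => Fin.snoc_last _ _
    have he₂last : ∀ c, e₂ c (Fin.last n) = y₂ := fun c => Fin.snoc_last _ _
    have he₁res : ∀ c, (fun u : Fin n => e₁ c u.castSucc) = c := by
      intro c; funext u; simp [he₁]
    have he₂res : ∀ c, (fun u : Fin n => e₂ c u.castSucc) = c := by
      intro c; funext u; simp [he₂]
    set S : Finset (Fin (n+1) → ℕ) := S₁.image e₁ ∪ S₂.image e₂ with hSdef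
    set W : (Fin (n+1) → ℕ) → ℝ := fun c =>
      if c (Fin.last n) = y₁ then w₁ (fun u => c u.castSucc) / 2
      else w₂ (fun u => c u.castSucc) / 2 with hWdef
    have hW₁ : ∀ c, W (e₁ c) = w₁ c / 2 := by
      intro c
      simp only [hWdef]
      rw [if_pos (he₁last c), he₁res c]
    have hW₂ : ∀ c, W (e₂ c) = w₂ c / 2 := by
      intro c
      have hne : ¬ (e₂ c (Fin.last n) = y₁) := by
        rw [he₂last c]; exact fun h => hyne h.symm
      simp only [hWdef]
      rw [if_neg hne, he₂res c]
    have hdisj : Disjoint (S₁.image e₁) (S₂.image e₂) := by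
      rw [Finset.disjoint_left]
      intro c hc1 hc2
      obtain ⟨a, -, ha⟩ := Finset.mem_image.1 hc1
      obtain ⟨b, -, hb⟩ := Finset.mem_image.1 hc2
      apply hyne
      rw [← he₁last a, ← he₂last b, ha, hb]
    have hsplit : ∀ f : (Fin (n+1) → ℕ) → ℝ,
        ∑ c ∈ S, f c = ∑ c ∈ S₁, f (e₁ c) + ∑ c ∈ S₂, f (e₂ c) := by
      intro f
      rw [hSdef, Finset.sum_union hdisj,
        Finset.sum_image (fun a _ b _ h => hinj y₁ h),
        Finset.sum_image (fun a _ b _ h => hinj y₂ h)]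
    have hfsplit : ∀ (v : Fin (n+1)) (x : ℕ),
        ∑ c ∈ S.filter (fun c => c v = x), W c
        = ∑ c ∈ S₁.filter (fun c => e₁ c v = x), W (e₁ c)
          + ∑ c ∈ S₂.filter (fun c => e₂ c v = x), W (e₂ c) := by
      intro v x
      rw [hSdef, Finset.filter_union, Finset.filter_image, Finset.filter_image,
        Finset.sum_union (hdisj.mono
          (Finset.image_subset_image (Finset.filter_subset _ _))
          (Finset.image_subset_image (Finset.filter_subset _ _))),
        Finset.sum_image (fun a _ b _ h => hinj y₁ h),
        Finset.sum_image (fun a _ b _ h => hinj y₂ h)]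
    have hy₁L : y₁ ∈ L (Fin.last n) := by rw [hyset]; simp
    have hy₂L : y₂ ∈ L (Fin.last n) := by rw [hyset]; simp
    -- goodness of colourings in each branch
    have hbranch : ∀ (y : ℕ) (Li : Fin n → Finset ℕ) (Si : Finset (Fin n → ℕ)),
        y ∈ L (Fin.last n) →
        (∀ u, Li u ⊆ L u.castSucc) →
        (∀ u, G.Adj (Fin.last n) u.castSucc → y ∉ Li u) →
        (∀ c ∈ Si, (∀ u, c u ∈ Li u) ∧ ∀ u v, G'.Adj u v → c u ≠ c v) →
        ∀ c ∈ Si, (∀ v, (Fin.snoc c y : Fin (n+1) → ℕ) v ∈ L v) ∧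
          ∀ u v, G.Adj u v → (Fin.snoc c y : Fin (n+1) → ℕ) u ≠ (Fin.snoc c y : Fin (n+1) → ℕ) v := by
      intro y Li Si hyL hsub hynot hSi c hc
      obtain ⟨hmem, hprop⟩ := hSi c hc
      have key : ∀ u' : Fin n, G.Adj (Fin.last n) u'.castSucc → y ≠ c u' := by
        intro u' hadj heq
        exact hynot u' hadj (heq ▸ hmem u')
      constructor
      · intro v
        refine Fin.lastCases ?_ (fun u => ?_) v
        · rw [Fin.snoc_last]; exact hyL
        · rw [Fin.snoc_castSucc]; exact hsub u (hmem u)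
      · intro u v
        refine Fin.lastCases ?_ (fun u' => ?_) u
        · refine Fin.lastCases ?_ (fun v' => ?_) v
          · intro hadj; exact absurd hadj (G.irrefl)
          · intro hadj
            rw [Fin.snoc_last, Fin.snoc_castSucc]
            exact key v' hadj
        · refine Fin.lastCases ?_ (fun v' => ?_) v
          · intro hadj
            rw [Fin.snoc_last, Fin.snoc_castSucc]
            exact fun h => key u' hadj.symm h.symm
          · intro hadj
            rw [Fin.snoc_castSucc, Fin.snoc_castSucc]
            exact hprop u' v' hadj
    have hsub₁ : ∀ u, L₁ u ⊆ L u.castSucc := by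
      intro u
      by_cases hadj : G.Adj (Fin.last n) u.castSucc
      · simp only [hL₁def, hadj, if_true]; exact Finset.erase_subset _ _
      · simp only [hL₁def, hadj, if_false]; exact Finset.Subset.refl _
    have hsub₂ : ∀ u, L₂ u ⊆ L u.castSucc := by
      intro u
      by_cases hadj : G.Adj (Fin.last n) u.castSucc
      · simp only [hL₂def, hadj, if_true]; exact Finset.erase_subset _ _
      · simp only [hL₂def, hadj, if_false]; exact Finset.Subset.refl _
    have hnot₁ : ∀ u, G.Adj (Fin.last n) u.castSucc → y₁ ∉ L₁ u := by
      intro u hadj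
      simp only [hL₁def, hadj, if_true]
      exact hy₁not u
    have hnot₂ : ∀ u, G.Adj (Fin.last n) u.castSucc → y₂ ∉ L₂ u := by
      intro u hadj
      simp only [hL₂def, hadj, if_true]
      exact hy₂not u
    refine ⟨S, W, ?_, ?_, ?_, ?_⟩
    · intro c hc
      rw [hSdef, Finset.mem_union] at hc
      rcases hc with hc | hc
      · obtain ⟨a, ha, rfl⟩ := Finset.mem_image.1 hc
        exact hbranch y₁ L₁ S₁ hy₁L hsub₁ hnot₁ hS₁ a ha
      · obtain ⟨a, ha, rfl⟩ := Finset.mem_image.1 hc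
        exact hbranch y₂ L₂ S₂ hy₂L hsub₂ hnot₂ hS₂ a ha
    · intro c hc
      rw [hSdef, Finset.mem_union] at hc
      rcases hc with hc | hc
      · obtain ⟨a, ha, rfl⟩ := Finset.mem_image.1 hc
        rw [show (e₁ a : Fin (n+1) → ℕ) = e₁ a from rfl, hW₁ a]
        have := hw₁ a ha; linarith
      · obtain ⟨a, ha, rfl⟩ := Finset.mem_image.1 hc
        rw [hW₂ a]
        have := hw₂ a ha; linarith
    · rw [hsplit W]
      have h1 : ∑ c ∈ S₁, W (e₁ c) = (∑ c ∈ S₁, w₁ c) / 2 := by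
        rw [Finset.sum_div]; exact Finset.sum_congr rfl fun c _ => hW₁ c
      have h2 : ∑ c ∈ S₂, W (e₂ c) = (∑ c ∈ S₂, w₂ c) / 2 := by
        rw [Finset.sum_div]; exact Finset.sum_congr rfl fun c _ => hW₂ c
      rw [h1, h2, hsum₁, hsum₂]; norm_num
    · intro v
      refine Fin.lastCases ?_ (fun u => ?_) v
      · -- v = last
        intro x hx
        rw [hfl]
        rw [hfsplit (Fin.last n) x]
        have hxy : x = y₁ ∨ x = y₂ := by
          rw [hyset] at hx; simpa using hx
        rcases hxy with rfl | rfl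
        · have hf1 : S₁.filter (fun c => e₁ c (Fin.last n) = x) = S₁ :=
            Finset.filter_true_of_mem (fun c _ => he₁last c)
          have hf2 : S₂.filter (fun c => e₂ c (Fin.last n) = x) = ∅ :=
            Finset.filter_false_of_mem (fun c _ => by
              rw [he₂last c]; exact fun h => hyne h.symm)
          rw [hf1, hf2]
          have h1 : ∑ c ∈ S₁, W (e₁ c) = (∑ c ∈ S₁, w₁ c) / 2 := by
            rw [Finset.sum_div]; exact Finset.sum_congr rfl fun c _ => hW₁ c
          rw [h1, hsum₁]
          simp
        · have hf1 : S₁.filter (fun c => e₁ c (Fin.last n) = x) = ∅ :=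
            Finset.filter_false_of_mem (fun c _ => by
              rw [he₁last c]; exact fun h => hyne h)
          have hf2 : S₂.filter (fun c => e₂ c (Fin.last n) = x) = S₂ :=
            Finset.filter_true_of_mem (fun c _ => he₂last c)
          rw [hf1, hf2]
          have h2 : ∑ c ∈ S₂, W (e₂ c) = (∑ c ∈ S₂, w₂ c) / 2 := by
            rw [Finset.sum_div]; exact Finset.sum_congr rfl fun c _ => hW₂ c
          rw [h2, hsum₂]
          simp
      · -- v = castSucc u
        intro x hx
        rw [hfsplit u.castSucc x]
        have hf₁ : S₁.filter (fun c => e₁ c u.castSucc = x) =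
            S₁.filter (fun c => c u = x) :=
          Finset.filter_congr (fun c _ => by simp [he₁])
        have hf₂ : S₂.filter (fun c => e₂ c u.castSucc = x) =
            S₂.filter (fun c => c u = x) :=
          Finset.filter_congr (fun c _ => by simp [he₂])
        rw [hf₁, hf₂]
        have h1 : ∑ c ∈ S₁.filter (fun c => c u = x), W (e₁ c)
            = (∑ c ∈ S₁.filter (fun c => c u = x), w₁ c) / 2 := by
          rw [Finset.sum_div]; exact Finset.sum_congr rfl fun c _ => hW₁ c
        have h2 : ∑ c ∈ S₂.filter (fun c => c u = x), W (e₂ c)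
            = (∑ c ∈ S₂.filter (fun c => c u = x), w₂ c) / 2 := by
          rw [Finset.sum_div]; exact Finset.sum_congr rfl fun c _ => hW₂ c
        rw [h1, h2]
        set M₁ : ℝ := ∑ c ∈ S₁.filter (fun c => c u = x), w₁ c with hM₁
        set M₂ : ℝ := ∑ c ∈ S₂.filter (fun c => c u = x), w₂ c with hM₂
        have hM₁0 : 0 ≤ M₁ :=
          Finset.sum_nonneg fun c hc => hw₁ c (Finset.mem_filter.1 hc).1
        have hM₂0 : 0 ≤ M₂ :=
          Finset.sum_nonneg fun c hc => hw₂ c (Finset.mem_filter.1 hc).1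
        rw [hdeg u]
        by_cases hadj : G.Adj (Fin.last n) u.castSucc
        · rw [if_pos hadj, pow_succ]
          have hxr : x ≠ r₁ u ∨ x ≠ r₂ u := by
            rcases eq_or_ne x (r₁ u) with h | h
            · right; rw [h]; exact hrne u
            · left; exact h
          rcases hxr with h | h
          · have hx₁ : x ∈ L₁ u := by
              simp only [hL₁def, hadj, if_true]
              exact Finset.mem_erase.2 ⟨h, hx⟩
            have hb := hmar₁ u x hx₁
            rw [← hM₁] at hb
            linarith
          · have hx₂ : x ∈ L₂ u := by
              simp only [hL₂def, hadj, if_true]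
              exact Finset.mem_erase.2 ⟨h, hx⟩
            have hb := hmar₂ u x hx₂
            rw [← hM₂] at hb
            linarith
        · rw [if_neg hadj]
          have hx₁ : x ∈ L₁ u := by
            simp only [hL₁def, hadj, if_false]; exact hx
          have hx₂ : x ∈ L₂ u := by
            simp only [hL₂def, hadj, if_false]; exact hx
          have hb₁ := hmar₁ u x hx₁
          have hb₂ := hmar₂ u x hx₂
          rw [← hM₁] at hb₁
          rw [← hM₂] at hb₂
          linarith

/-- Local-degree weighted flexibility: with lists of size deg⁺(v)+2 (forward
degree with respect to a vertex ordering), there is a distribution on proper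
L-colourings giving every colour at v probability at least (1/2)^(deg⁺(v)+1). -/
theorem stmt_5 (n : ℕ) (G : SimpleGraph (Fin n)) [DecidableRel G.Adj]
    (L : Fin n → Finset ℕ)
    (hL : ∀ v, (L v).card =
      (Finset.univ.filter (fun u => G.Adj v u ∧ v < u)).card + 2) :
    ∃ (S : Finset (Fin n → ℕ)) (w : (Fin n → ℕ) → ℝ),
      (∀ c ∈ S, (∀ v, c v ∈ L v) ∧ ∀ u v, G.Adj u v → c u ≠ c v) ∧
      (∀ c ∈ S, 0 ≤ w c) ∧ (∑ c ∈ S, w c = 1) ∧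
      (∀ v, ∀ x ∈ L v,
        ((1 : ℝ)/2) ^ ((Finset.univ.filter (fun u => G.Adj v u ∧ v < u)).card + 1)
          ≤ ∑ c ∈ S.filter (fun c => c v = x), w c) := by
  exact aux5 n G L hL
end

section
/- Let p ≥ 1 and let each of the p+1 vertices v₁,…,v_{p+1} of a complete graph K_{p+1} have a colour list of size p+1, with a perfect matching between the lists of every pair of vertices specifying, for each colour of one vertex, the unique conflicting colour of the other (a (p+1)-fold correspondence-cover with full matchings). Suppose there is a multiset C of (p+1)! proper correspondence-colourings of K_{p+1} − v_{p+1} such that for every 1 ≤ i ≤ p, the restriction of C to the vertices {v_i, v_{i+1}, …, v_p} takes exactly (p+1)!/i! distinct values, each with multiplicity i!. Then C can be extended to a multiset of (p+1)! proper correspondence-colourings of all of K_{p+1} such that for every 1 ≤ i ≤ p+1, the restriction to {v_i, …, v_{p+1}} takes exactly (p+1)!/(i−1)! distinct values, each with multiplicity (i−1)!. -/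
open Nat

section Aux
variable {p : ℕ}

/-- restriction of a colouring to coordinates j with i ≤ j+1. -/
def rr (i : ℕ) (c : Fin p → Fin (p+1)) : Fin p → Option (Fin (p+1)) :=
  fun j => if i ≤ (j : ℕ) + 1 then some (c j) else none

lemma rr_one_inj : Function.Injective (rr (p := p) 1) := by
  intro c c' h
  funext j
  have := congrFun h j
  simpa [rr] using this

lemma rr_mono {i i' : ℕ} (hii : i ≤ i') {c c' : Fin p → Fin (p+1)}
    (h : rr i c = rr i c') : rr i' c = rr i' c' := by
  funext j
  have := congrFun h j
  by_cases hj : i' ≤ (j : ℕ) + 1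
  · have hj' : i ≤ (j : ℕ) + 1 := le_trans hii hj
    simp only [rr, if_pos hj, if_pos hj'] at this ⊢
    exact this
  · simp [rr, if_neg hj]

end Aux

theorem keyQ (p : ℕ) (m : Fin p → Equiv.Perm (Fin (p+1)))
    (T : Finset (Fin p → Fin (p+1)))
    (hcc : ∀ i : ℕ, 1 ≤ i → i ≤ p + 1 → ∀ c ∈ T,
      (T.filter (fun c' => rr i c' = rr i c)).card = i !) :
    ∀ i : ℕ, 1 ≤ i → i ≤ p + 1 →
    ∀ A : (Fin p → Fin (p+1)) → Finset (Fin (p+1)),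
    (∀ c ∈ T, ∀ c' ∈ T, rr i c = rr i c' → A c = A c') →
    (∀ c ∈ T, (A c).card = i) →
    (∀ c ∈ T, ∀ j : Fin p, i ≤ (j : ℕ) + 1 → m j (c j) ∉ A c) →
    ∃ f : (Fin p → Fin (p+1)) → Fin (p+1),
      (∀ c ∈ T, f c ∈ A c) ∧
      (∀ c ∈ T, ∀ j : Fin p, (j : ℕ) + 2 ≤ i → f c ≠ m j (c j)) ∧
      (∀ c ∈ T, ∀ a, (T.filter (fun c' => rr i c' = rr i c ∧ f c' = a)).card
         = if a ∈ A c then (i-1)! else 0) ∧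
      (∀ i' : ℕ, 1 ≤ i' → i' < i → ∀ c ∈ T, ∀ a,
        (T.filter (fun c' => rr i' c' = rr i' c ∧ f c' = a)).card = 0 ∨
        (T.filter (fun c' => rr i' c' = rr i' c ∧ f c' = a)).card = (i'-1)!) := by
  intro i hi1
  induction i, hi1 using Nat.le_induction with
  | base =>
    intro _ A hAcl hAcard hAforb
    refine ⟨fun c => if h : (A c).Nonempty then h.choose else 0, ?_, ?_, ?_, ?_⟩
    · intro c hc
      have h : (A c).Nonempty := Finset.card_pos.mp (by rw [hAcard c hc]; norm_num)
      simp only [dif_pos h]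
      exact h.choose_spec
    · intro c hc j hj; omega
    · intro c hc a
      have h : (A c).Nonempty := Finset.card_pos.mp (by rw [hAcard c hc]; norm_num)
      set f : (Fin p → Fin (p+1)) → Fin (p+1) :=
        fun c => if h : (A c).Nonempty then h.choose else 0 with hf
      have hfc : f c ∈ A c := by simp only [hf, dif_pos h]; exact h.choose_spec
      have hAc : A c = {f c} := by
        obtain ⟨b, hb⟩ := Finset.card_eq_one.mp (hAcard c hc)
        rw [hb] at hfc ⊢
        simp_all
      have : T.filter (fun c' => rr 1 c' = rr 1 c ∧ f c' = a)
          = if a = f c then {c} else ∅ := by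
        ext c'
        constructor
        · intro hc'
          simp only [Finset.mem_filter] at hc'
          have hcc' : c' = c := rr_one_inj hc'.2.1
          subst hcc'
          simp [hc'.2.2.symm]
        · intro hc'
          by_cases hafc : a = f c
          · simp only [if_pos hafc, Finset.mem_singleton] at hc'
            subst hc'
            exact Finset.mem_filter.mpr ⟨hc, rfl, hafc.symm⟩
          · simp [if_neg hafc] at hc'
      rw [this, hAc]
      by_cases hafc : a = f c <;> simp [hafc]
    · intro i' hi' hi'1; omega
  | succ i hi ih =>
    intro hip A hAcl hAcard hAforb
    classical
    have hi1p : i ≤ p := by omega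
    set j₀ : Fin p := ⟨i - 1, by omega⟩ with hj₀def
    have hj₀ : (j₀ : ℕ) + 1 = i := by simp [hj₀def]; omega
    set mbar : (Fin p → Option (Fin (p+1))) → Fin (p+1) :=
      fun k => m j₀ ((k j₀).getD 0) with hmbardef
    set Kls : (Fin p → Option (Fin (p+1))) → Finset (Fin p → Fin (p+1)) :=
      fun g => T.filter (fun c => rr (i+1) c = g) with hKlsdef
    set Bg : (Fin p → Option (Fin (p+1))) → Finset (Fin p → Option (Fin (p+1))) :=
      fun g => (Kls g).image (rr i) with hBgdef
    have hBmem : ∀ c ∈ T, rr i c ∈ Bg (rr (i+1) c) := by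
      intro c hc
      exact Finset.mem_image_of_mem _ (Finset.mem_filter.mpr ⟨hc, rfl⟩)
    have hrrj₀ : ∀ c : Fin p → Fin (p+1), rr i c j₀ = some (c j₀) := by
      intro c
      simp [rr, hj₀]
    have hmbar_rr : ∀ c : Fin p → Fin (p+1), mbar (rr i c) = m j₀ (c j₀) := by
      intro c
      simp [hmbardef, hrrj₀ c]
    -- fibers of rr i inside a class are full rr-i-classes
    have hfib_eq : ∀ g, ∀ k ∈ Bg g, ∀ ck ∈ T, rr (i+1) ck = g → rr i ck = k →
        (Kls g).filter (fun c' => rr i c' = k) = T.filter (fun c' => rr i c' = rr i ck) := by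
      intro g k hk ck hckT hckg hckk
      ext x
      simp only [Finset.mem_filter, hKlsdef]
      constructor
      · rintro ⟨⟨hxT, _⟩, hxk⟩
        exact ⟨hxT, by rw [hxk, hckk]⟩
      · rintro ⟨hxT, hxk⟩
        have : rr (i+1) x = rr (i+1) ck := rr_mono (Nat.le_succ i) hxk
        exact ⟨⟨hxT, by rw [this, hckg]⟩, by rw [hxk, hckk]⟩
    have hwit : ∀ g, ∀ k ∈ Bg g, ∃ ck ∈ T, rr (i+1) ck = g ∧ rr i ck = k := by
      intro g k hk
      obtain ⟨ck, hck, hckk⟩ := Finset.mem_image.mp hk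
      have := Finset.mem_filter.mp hck
      exact ⟨ck, this.1, this.2, hckk⟩
    have hBcard : ∀ c ∈ T, (Bg (rr (i+1) c)).card = i + 1 := by
      intro c hc
      have hK : (Kls (rr (i+1) c)).card = (i+1)! := hcc (i+1) (by omega) hip c hc
      have hfw : (Kls (rr (i+1) c)).card
          = ∑ k ∈ Bg (rr (i+1) c), ((Kls (rr (i+1) c)).filter (fun c' => rr i c' = k)).card :=
        Finset.card_eq_sum_card_fiberwise (fun x hx => Finset.mem_image_of_mem _ hx)
      have hsum : ∀ k ∈ Bg (rr (i+1) c),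
          ((Kls (rr (i+1) c)).filter (fun c' => rr i c' = k)).card = i ! := by
        intro k hk
        obtain ⟨ck, hckT, hckg, hckk⟩ := hwit _ k hk
        rw [hfib_eq _ k hk ck hckT hckg hckk]
        exact hcc i (by omega) (by omega) ck hckT
      rw [Finset.sum_congr rfl hsum, Finset.sum_const, smul_eq_mul] at hfw
      rw [hK, factorial_succ] at hfw
      exact Nat.eq_of_mul_eq_mul_right (factorial_pos i) hfw.symm
    have hmbarInj : ∀ g, Set.InjOn mbar (Bg g) := by
      intro g k₁ hk₁ k₂ hk₂ heq
      obtain ⟨c₁, hc₁T, hc₁g, hc₁k⟩ := hwit g k₁ (Finset.mem_coe.mp hk₁)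
      obtain ⟨c₂, hc₂T, hc₂g, hc₂k⟩ := hwit g k₂ (Finset.mem_coe.mp hk₂)
      subst hc₁k; subst hc₂k
      rw [hmbar_rr c₁, hmbar_rr c₂] at heq
      have hj₀eq : c₁ j₀ = c₂ j₀ := (m j₀).injective heq
      funext j
      by_cases hj1 : i + 1 ≤ (j : ℕ) + 1
      · have := congrFun (hc₁g.trans hc₂g.symm) j
        simp only [rr, if_pos hj1] at this
        simp only [rr, if_pos (by omega : i ≤ (j : ℕ) + 1)]
        exact this
      · by_cases hj2 : i ≤ (j : ℕ) + 1
        · have hjj₀ : j = j₀ := by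
            apply Fin.ext
            simp [hj₀def]; omega
          subst hjj₀
          simp only [rr, if_pos hj2, hj₀eq]
        · simp only [rr, if_neg hj2]
    -- existence of the per-class bijection
    have hpsi : ∀ g : Fin p → Option (Fin (p+1)),
        ∃ ψ : (Fin p → Option (Fin (p+1))) → Fin (p+1),
        ∀ c ∈ T, rr (i+1) c = g →
          ((∀ k ∈ Bg g, mbar k ∈ A c → ψ k = mbar k) ∧
           Set.InjOn ψ (Bg g) ∧ (Bg g).image ψ = A c) := by
      intro g
      by_cases hg : ∃ c₀ ∈ T, rr (i+1) c₀ = g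
      · obtain ⟨c₀, hc₀, hgc₀⟩ := hg
        have hAcard₀ : (A c₀).card = i + 1 := hAcard c₀ hc₀
        have hBcard₀ : (Bg g).card = i + 1 := by rw [← hgc₀]; exact hBcard c₀ hc₀
        have hinj : Set.InjOn mbar (Bg g) := hmbarInj g
        set B1 := (Bg g).filter (fun k => mbar k ∈ A c₀) with hB1def
        set img := B1.image mbar with himgdef
        have hB1sub : B1 ⊆ Bg g := Finset.filter_subset _ _
        have himgsub : img ⊆ A c₀ := by
          intro a ha
          obtain ⟨k, hk, rfl⟩ := Finset.mem_image.mp ha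
          exact (Finset.mem_filter.mp hk).2
        have hinj1 : Set.InjOn mbar B1 := hinj.mono (Finset.coe_subset.mpr hB1sub)
        have himgcard : img.card = B1.card := Finset.card_image_of_injOn hinj1
        have hcards : ((Bg g) \ B1).card = (A c₀ \ img).card := by
          rw [Finset.card_sdiff_of_subset hB1sub, Finset.card_sdiff_of_subset himgsub, hBcard₀, hAcard₀, himgcard]
        set e := Finset.equivOfCardEq hcards with hedef
        refine ⟨fun k => if h : k ∈ (Bg g) \ B1 then (e ⟨k, h⟩ : Fin (p+1)) else mbar k, ?_⟩
        intro c hcT hgc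
        have hAcc : A c = A c₀ := hAcl c hcT c₀ hc₀ (by rw [hgc, hgc₀])
        rw [hAcc]
        refine ⟨?_, ?_, ?_⟩
        · intro k hk hmk
          have hkB1 : k ∈ B1 := Finset.mem_filter.mpr ⟨hk, hmk⟩
          simp only [dif_neg (by simp [Finset.mem_sdiff, hkB1] : ¬ k ∈ (Bg g) \ B1)]
        · intro k₁ hk₁ k₂ hk₂ heq
          by_cases h₁ : k₁ ∈ (Bg g) \ B1 <;> by_cases h₂ : k₂ ∈ (Bg g) \ B1
          · simp only [dif_pos h₁, dif_pos h₂] at heq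
            have := e.injective (Subtype.ext heq)
            exact congrArg Subtype.val this
          · simp only [dif_pos h₁, dif_neg h₂] at heq
            have hk₂B1 : k₂ ∈ B1 := by
              by_contra hh
              exact h₂ (Finset.mem_sdiff.mpr ⟨Finset.mem_coe.mp hk₂, hh⟩)
            have h1mem : (e ⟨k₁, h₁⟩ : Fin (p+1)) ∈ A c₀ \ img := (e ⟨k₁, h₁⟩).2
            have h2mem : mbar k₂ ∈ img := Finset.mem_image_of_mem _ hk₂B1
            rw [heq] at h1mem
            exact absurd (Finset.mem_sdiff.mp h1mem).2 (by simp [h2mem])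
          · simp only [dif_neg h₁, dif_pos h₂] at heq
            have hk₁B1 : k₁ ∈ B1 := by
              by_contra hh
              exact h₁ (Finset.mem_sdiff.mpr ⟨Finset.mem_coe.mp hk₁, hh⟩)
            have h2mem : (e ⟨k₂, h₂⟩ : Fin (p+1)) ∈ A c₀ \ img := (e ⟨k₂, h₂⟩).2
            have h1mem : mbar k₁ ∈ img := Finset.mem_image_of_mem _ hk₁B1
            rw [← heq] at h2mem
            exact absurd (Finset.mem_sdiff.mp h2mem).2 (by simp [h1mem])
          · simp only [dif_neg h₁, dif_neg h₂] at heq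
            have hk₁B1 : k₁ ∈ B1 := by
              by_contra hh
              exact h₁ (Finset.mem_sdiff.mpr ⟨Finset.mem_coe.mp hk₁, hh⟩)
            have hk₂B1 : k₂ ∈ B1 := by
              by_contra hh
              exact h₂ (Finset.mem_sdiff.mpr ⟨Finset.mem_coe.mp hk₂, hh⟩)
            exact hinj1 (Finset.mem_coe.mpr hk₁B1) (Finset.mem_coe.mpr hk₂B1) heq
        · apply Finset.Subset.antisymm
          · intro a ha
            obtain ⟨k, hk, rfl⟩ := Finset.mem_image.mp ha
            by_cases h : k ∈ (Bg g) \ B1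
            · simp only [dif_pos h]
              exact (Finset.mem_sdiff.mp (e ⟨k, h⟩).2).1
            · simp only [dif_neg h]
              have hkB1 : k ∈ B1 := by
                by_contra hh
                exact h (Finset.mem_sdiff.mpr ⟨hk, hh⟩)
              exact (Finset.mem_filter.mp hkB1).2
          · intro a ha
            by_cases haimg : a ∈ img
            · obtain ⟨k, hk, rfl⟩ := Finset.mem_image.mp haimg
              refine Finset.mem_image.mpr ⟨k, hB1sub hk, ?_⟩
              simp only [dif_neg (by simp [Finset.mem_sdiff, hk] : ¬ k ∈ (Bg g) \ B1)]
            · have haa : a ∈ A c₀ \ img := Finset.mem_sdiff.mpr ⟨ha, haimg⟩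
              refine Finset.mem_image.mpr ⟨(e.symm ⟨a, haa⟩ : _), (Finset.mem_sdiff.mp (e.symm ⟨a, haa⟩).2).1, ?_⟩
              simp only [dif_pos (e.symm ⟨a, haa⟩).2]
              exact congrArg Subtype.val (e.apply_symm_apply ⟨a, haa⟩)
      · refine ⟨fun _ => 0, ?_⟩
        intro c hcT hgc
        exact absurd ⟨c, hcT, hgc⟩ hg
    choose Ψ hΨ using hpsi
    set miss : (Fin p → Fin (p+1)) → Fin (p+1) :=
      fun c => Ψ (rr (i+1) c) (rr i c) with hmissdef
    set A' : (Fin p → Fin (p+1)) → Finset (Fin (p+1)) :=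
      fun c => (A c).erase (miss c) with hA'def
    have hmissmem : ∀ c ∈ T, miss c ∈ A c := by
      intro c hc
      have := (hΨ (rr (i+1) c) c hc rfl).2.2
      rw [← this]
      exact Finset.mem_image_of_mem _ (hBmem c hc)
    have hA'cl : ∀ c ∈ T, ∀ c' ∈ T, rr i c = rr i c' → A' c = A' c' := by
      intro c hc c' hc' h
      have h1 : rr (i+1) c = rr (i+1) c' := rr_mono (Nat.le_succ i) h
      simp only [hA'def, hmissdef, hAcl c hc c' hc' h1, h1, h]
    have hA'card : ∀ c ∈ T, (A' c).card = i := by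
      intro c hc
      simp only [hA'def]
      rw [Finset.card_erase_of_mem (hmissmem c hc), hAcard c hc]
      omega
    have hA'forb : ∀ c ∈ T, ∀ j : Fin p, i ≤ (j : ℕ) + 1 → m j (c j) ∉ A' c := by
      intro c hc j hj
      by_cases hj1 : i + 1 ≤ (j : ℕ) + 1
      · intro hmem
        exact hAforb c hc j hj1 (Finset.mem_of_mem_erase hmem)
      · have hjj₀ : j = j₀ := by
          apply Fin.ext
          simp [hj₀def]; omega
        subst hjj₀
        rw [← hmbar_rr c]
        by_cases hin : mbar (rr i c) ∈ A c
        · have hΨeq : Ψ (rr (i+1) c) (rr i c) = mbar (rr i c) :=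
            (hΨ (rr (i+1) c) c hc rfl).1 (rr i c) (hBmem c hc) hin
          simp only [hA'def, hmissdef]
          rw [← hΨeq]
          exact Finset.notMem_erase _ _
        · intro hmem
          exact hin (Finset.mem_of_mem_erase hmem)
    obtain ⟨f, hfmem, hfprop, hfcnt, hfweak⟩ := ih (by omega) A' hA'cl hA'card hA'forb
    refine ⟨f, ?_, ?_, ?_, ?_⟩
    · intro c hc
      exact Finset.mem_of_mem_erase (hfmem c hc)
    · intro c hc j hj
      by_cases hj1 : (j : ℕ) + 2 ≤ i
      · exact hfprop c hc j hj1
      · have hjj₀ : j = j₀ := by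
          apply Fin.ext
          simp [hj₀def]; omega
        subst hjj₀
        intro heq
        exact hA'forb c hc j₀ (by omega) (heq ▸ hfmem c hc)
    · intro c hc a
      have hfibmap : ∀ x ∈ T.filter (fun c' => rr (i+1) c' = rr (i+1) c ∧ f c' = a),
          rr i x ∈ Bg (rr (i+1) c) := by
        intro x hx
        have hx' := Finset.mem_filter.mp hx
        exact Finset.mem_image_of_mem _ (Finset.mem_filter.mpr ⟨hx'.1, hx'.2.1⟩)
      rw [Finset.card_eq_sum_card_fiberwise hfibmap]
      have hterm : ∀ k ∈ Bg (rr (i+1) c),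
          ((T.filter (fun c' => rr (i+1) c' = rr (i+1) c ∧ f c' = a)).filter
            (fun c' => rr i c' = k)).card
          = if a ∈ (A c).erase (Ψ (rr (i+1) c) k) then (i-1)! else 0 := by
        intro k hk
        obtain ⟨ck, hckT, hckg, hckk⟩ := hwit _ k hk
        have hset : (T.filter (fun c' => rr (i+1) c' = rr (i+1) c ∧ f c' = a)).filter
            (fun c' => rr i c' = k)
            = T.filter (fun c' => rr i c' = rr i ck ∧ f c' = a) := by
          ext x
          simp only [Finset.mem_filter]
          constructor
          · rintro ⟨⟨hxT, _, hxa⟩, hxk⟩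
            exact ⟨hxT, by rw [hxk, hckk], hxa⟩
          · rintro ⟨hxT, hxk, hxa⟩
            have h1 : rr (i+1) x = rr (i+1) ck := rr_mono (Nat.le_succ i) hxk
            exact ⟨⟨hxT, by rw [h1, hckg], hxa⟩, by rw [hxk, hckk]⟩
        rw [hset, hfcnt ck hckT a]
        have hAck : A ck = A c := hAcl ck hckT c hc hckg
        have hmissck : miss ck = Ψ (rr (i+1) c) k := by
          simp only [hmissdef]
          rw [hckg, hckk]
        simp only [hA'def, hAck, hmissck]
      rw [Finset.sum_congr rfl hterm]
      by_cases ha : a ∈ A c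
      · rw [if_pos ha]
        have hterm2 : ∀ k ∈ Bg (rr (i+1) c),
            (if a ∈ (A c).erase (Ψ (rr (i+1) c) k) then (i-1)! else 0)
            = if ¬ Ψ (rr (i+1) c) k = a then (i-1)! else 0 := by
          intro k hk
          by_cases h : Ψ (rr (i+1) c) k = a
          · rw [if_neg (by simp [h]), if_neg (by simp [Finset.mem_erase, h])]
          · rw [if_pos h, if_pos (Finset.mem_erase.mpr ⟨fun hh => h hh.symm, ha⟩)]
        rw [Finset.sum_congr rfl hterm2, ← Finset.sum_filter, Finset.sum_const, smul_eq_mul]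
        have hone : ((Bg (rr (i+1) c)).filter (fun k => Ψ (rr (i+1) c) k = a)).card = 1 := by
          have hspec := hΨ (rr (i+1) c) c hc rfl
          have hex : ∃ k₀ ∈ Bg (rr (i+1) c), Ψ (rr (i+1) c) k₀ = a := by
            have : a ∈ (Bg (rr (i+1) c)).image (Ψ (rr (i+1) c)) := by rw [hspec.2.2]; exact ha
            obtain ⟨k₀, hk₀, hk₀a⟩ := Finset.mem_image.mp this
            exact ⟨k₀, hk₀, hk₀a⟩
          obtain ⟨k₀, hk₀, hk₀a⟩ := hex
          rw [Finset.card_eq_one]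
          refine ⟨k₀, ?_⟩
          ext k
          simp only [Finset.mem_filter, Finset.mem_singleton]
          constructor
          · rintro ⟨hkB, hka⟩
            exact hspec.2.1 (Finset.mem_coe.mpr hkB) (Finset.mem_coe.mpr hk₀) (by rw [hka, hk₀a])
          · rintro rfl
            exact ⟨hk₀, hk₀a⟩
        have hsplit := Finset.card_filter_add_card_filter_not
          (s := Bg (rr (i+1) c)) (p := fun k => Ψ (rr (i+1) c) k = a)
        rw [hBcard c hc, hone] at hsplit
        have : ((Bg (rr (i+1) c)).filter (fun k => ¬ Ψ (rr (i+1) c) k = a)).card = i := by omega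
        rw [this]
        rw [show i + 1 - 1 = i from rfl]
        exact Nat.mul_factorial_pred (by omega)
      · rw [if_neg ha]
        apply Finset.sum_eq_zero
        intro k hk
        rw [if_neg (fun hmem => ha (Finset.mem_of_mem_erase hmem))]
    · intro i' hi'1 hi'2 c hc a
      by_cases h : i' < i
      · exact hfweak i' hi'1 h c hc a
      · have : i' = i := by omega
        subst this
        rw [hfcnt c hc a]
        by_cases h2 : a ∈ A' c
        · right; rw [if_pos h2]
        · left; rw [if_neg h2]


/-- Lemma 5.2: a multiset of (p+1)! proper correspondence-colourings of
K_{p+1} - v_{p+1} that is balanced on every suffix {v_i,...,v_p} can be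
extended to v_{p+1} so that every suffix {v_i,...,v_{p+1}} becomes balanced.
Vertices v_1,...,v_{p+1} are indexed 0,...,p; colours are Fin (p+1); for
i < j the permutation `M i j` encodes the full matching (c(v_j) = M i j (c(v_i))
is forbidden). The restriction to {v_i,...} is encoded by the map sending a
colouring to the function returning `some` on kept vertices and `none` otherwise. -/
theorem stmt_8 (p : ℕ) (hp : 1 ≤ p)
    (M : Fin (p + 1) → Fin (p + 1) → Equiv.Perm (Fin (p + 1)))
    (C : Multiset (Fin p → Fin (p + 1)))
    (hcard : Multiset.card C = (p + 1)!)
    (hproper : ∀ c ∈ C, ∀ i j : Fin p, i < j →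
      c j ≠ M i.castSucc j.castSucc (c i))
    (hbal : ∀ i : ℕ, 1 ≤ i → i ≤ p →
      (∀ g : Fin p → Option (Fin (p + 1)),
        (C.map (fun c => fun j : Fin p => if i ≤ (j : ℕ) + 1 then some (c j) else none)).count g = 0 ∨
        (C.map (fun c => fun j : Fin p => if i ≤ (j : ℕ) + 1 then some (c j) else none)).count g = i !) ∧
      (C.map (fun c => fun j : Fin p => if i ≤ (j : ℕ) + 1 then some (c j) else none)).toFinset.card
        = (p + 1)! / i !) :
    ∃ D : Multiset (Fin (p + 1) → Fin (p + 1)),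
      Multiset.card D = (p + 1)! ∧
      D.map (fun f => fun j : Fin p => f j.castSucc) = C ∧
      (∀ f ∈ D, ∀ i j : Fin (p + 1), i < j → f j ≠ M i j (f i)) ∧
      (∀ i : ℕ, 1 ≤ i → i ≤ p + 1 →
        (∀ g : Fin (p + 1) → Option (Fin (p + 1)),
          (D.map (fun f => fun j : Fin (p + 1) => if i ≤ (j : ℕ) + 1 then some (f j) else none)).count g = 0 ∨
          (D.map (fun f => fun j : Fin (p + 1) => if i ≤ (j : ℕ) + 1 then some (f j) else none)).count g = (i - 1)!) ∧
        (D.map (fun f => fun j : Fin (p + 1) => if i ≤ (j : ℕ) + 1 then some (f j) else none)).toFinset.card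
          = (p + 1)! / (i - 1)!) := by
  classical
  have hrr : ∀ i : ℕ, (fun c : Fin p → Fin (p+1) => fun j : Fin p =>
      if i ≤ (j : ℕ) + 1 then some (c j) else none) = rr (p := p) i := fun _ => rfl
  -- C has no duplicates
  have hnd : C.Nodup := by
    have h1 := (hbal 1 le_rfl hp).1
    have hmapnd : (C.map (rr 1)).Nodup := by
      rw [Multiset.nodup_iff_count_le_one]
      intro g
      rcases h1 g with h | h
      · rw [hrr 1] at h; omega
      · rw [hrr 1] at h; simp [factorial] at h; omega
    exact hmapnd.of_map (rr 1)
  set T := C.toFinset with hT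
  have hTv : T.val = C := by rw [hT]; exact Multiset.dedup_eq_self.mpr hnd
  have hTcard : T.card = (p+1)! := by
    rw [← hcard, hT, Multiset.toFinset_card_of_nodup hnd]
  have hcount : ∀ i : ℕ, ∀ c, (C.map (rr i)).count (rr i c)
      = (T.filter (fun c' => rr i c' = rr i c)).card := by
    intro i c
    rw [Multiset.count_map]
    have : Multiset.filter (fun a => rr i c = rr i a) C
        = Multiset.filter (fun c' => rr i c' = rr i c) T.val := by
      rw [hTv]
      exact Multiset.filter_congr (fun x _ => by constructor <;> exact fun h => h.symm)
    rw [this]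
    rfl
  have hcc : ∀ i : ℕ, 1 ≤ i → i ≤ p + 1 → ∀ c ∈ T,
      (T.filter (fun c' => rr i c' = rr i c)).card = i ! := by
    intro i hi1 hi2 c hc
    by_cases hip : i ≤ p
    · have hbal' := (hbal i hi1 hip).1 (rr i c)
      rw [hrr i, hcount i c] at hbal'
      rcases hbal' with h | h
      · exfalso
        have hmem : c ∈ T.filter (fun c' => rr i c' = rr i c) :=
          Finset.mem_filter.mpr ⟨hc, rfl⟩
        have := Finset.card_pos.mpr ⟨c, hmem⟩
        omega
      · exact h
    · have hieq : i = p + 1 := by omega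
      have hall : T.filter (fun c' => rr i c' = rr i c) = T := by
        apply Finset.filter_true_of_mem
        intro x _
        funext j
        have hj : ¬ i ≤ (j : ℕ) + 1 := by have := j.isLt; omega
        simp [rr, hj]
      rw [hall, hTcard, hieq]
  obtain ⟨f, hfmem, hfprop, hfcnt, hfweak⟩ :=
    keyQ p (fun j => M j.castSucc (Fin.last p)) T hcc (p+1) (by omega) (by omega)
      (fun _ => Finset.univ)
      (fun _ _ _ _ _ => rfl)
      (fun c _ => by simp)
      (fun c _ j hj => by exfalso; have := j.isLt; omega)
  have hcombined : ∀ i' : ℕ, 1 ≤ i' → i' ≤ p + 1 → ∀ c ∈ T, ∀ a,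
      (T.filter (fun c' => rr i' c' = rr i' c ∧ f c' = a)).card = 0 ∨
      (T.filter (fun c' => rr i' c' = rr i' c ∧ f c' = a)).card = (i'-1)! := by
    intro i' h1 h2 c hc a
    by_cases h : i' < p + 1
    · exact hfweak i' h1 h c hc a
    · have : i' = p + 1 := by omega
      subst this
      right
      rw [hfcnt c hc a, if_pos (Finset.mem_univ a)]
  refine ⟨C.map (fun c => Fin.snoc c (f c)), by simp [hcard], ?_, ?_, ?_⟩
  · rw [Multiset.map_map]
    have : ((fun f' : Fin (p+1) → Fin (p+1) => fun j : Fin p => f' j.castSucc)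
        ∘ (fun c => Fin.snoc c (f c))) = id := by
      funext c
      funext j
      simp [Fin.snoc_castSucc]
    rw [this, Multiset.map_id]
  · intro f' hf' i j hij
    obtain ⟨c, hcC, rfl⟩ := Multiset.mem_map.mp hf'
    have hcT : c ∈ T := Multiset.mem_toFinset.mpr hcC
    rcases Fin.eq_castSucc_or_eq_last j with ⟨j', rfl⟩ | rfl
    · rcases Fin.eq_castSucc_or_eq_last i with ⟨i', rfl⟩ | rfl
      · simp only [Fin.snoc_castSucc]
        exact hproper c hcC i' j' (by exact_mod_cast hij)
      · exact absurd hij (not_lt.mpr (le_of_lt (Fin.castSucc_lt_last j')))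
    · rcases Fin.eq_castSucc_or_eq_last i with ⟨i', rfl⟩ | rfl
      · simp only [Fin.snoc_castSucc, Fin.snoc_last]
        exact hfprop c hcT i' (by have := i'.isLt; omega)
      · exact absurd hij (lt_irrefl _)
  · intro i hi1 hi2
    set Phi : (Fin p → Fin (p+1)) → (Fin (p+1) → Option (Fin (p+1))) := fun c => fun j : Fin (p+1) => if i ≤ (j : ℕ) + 1 then some ((Fin.snoc c (f c) : Fin (p+1) → Fin (p+1)) j) else none with hPhidef
    have hmapeq : (C.map (fun c => Fin.snoc c (f c))).map
        (fun f' => fun j : Fin (p+1) => if i ≤ (j : ℕ) + 1 then some (f' j) else none)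
        = C.map Phi := by
      rw [Multiset.map_map]
      rfl
    have hphi : ∀ c c' : Fin p → Fin (p+1),
        Phi c = Phi c' ↔ (rr i c = rr i c' ∧ f c = f c') := by
      intro c c'
      constructor
      · intro h
        constructor
        · funext j
          have hcf := congrFun h j.castSucc
          simpa [hPhidef, rr, Fin.snoc_castSucc] using hcf
        · have hcf := congrFun h (Fin.last p)
          have hle : i ≤ (Fin.last p : ℕ) + 1 := by simp [Fin.last]; omega
          simp only [hPhidef, if_pos hle, Fin.snoc_last] at hcf
          exact Option.some.inj hcf
      · rintro ⟨h1, h2⟩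
        funext j
        rcases Fin.eq_castSucc_or_eq_last j with ⟨j', rfl⟩ | rfl
        · have := congrFun h1 j'
          simpa [hPhidef, rr, Fin.snoc_castSucc] using this
        · have hle : i ≤ (Fin.last p : ℕ) + 1 := by simp [Fin.last]; omega
          simp only [hPhidef, if_pos hle, Fin.snoc_last, h2]
    have hcnt : ∀ g, (C.map Phi).count g = 0 ∨ (C.map Phi).count g = (i-1)! := by
      intro g
      by_cases hg : ∃ c₀ ∈ C, Phi c₀ = g
      · obtain ⟨c₀, hc₀, hgc₀⟩ := hg
        have hc₀T : c₀ ∈ T := Multiset.mem_toFinset.mpr hc₀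
        have hfilt : Multiset.filter (fun a => g = Phi a) C
            = (T.filter (fun c' => rr i c' = rr i c₀ ∧ f c' = f c₀)).val := by
          have : (T.filter (fun c' => rr i c' = rr i c₀ ∧ f c' = f c₀)).val
              = Multiset.filter (fun c' => rr i c' = rr i c₀ ∧ f c' = f c₀) T.val := rfl
          rw [this, hTv]
          apply Multiset.filter_congr
          intro x _
          constructor
          · intro h
            exact (hphi x c₀).mp (h.symm.trans hgc₀.symm)
          · intro h
            rw [← hgc₀]
            exact ((hphi x c₀).mpr h).symm
        have hcard' : (C.map Phi).count g
            = (T.filter (fun c' => rr i c' = rr i c₀ ∧ f c' = f c₀)).card := by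
          rw [Multiset.count_map, hfilt]
          rfl
        rw [hcard']
        rcases hcombined i hi1 hi2 c₀ hc₀T (f c₀) with h | h
        · exfalso
          have hmem : c₀ ∈ T.filter (fun c' => rr i c' = rr i c₀ ∧ f c' = f c₀) :=
            Finset.mem_filter.mpr ⟨hc₀T, rfl, rfl⟩
          have := Finset.card_pos.mpr ⟨c₀, hmem⟩
          omega
        · right; exact h
      · left
        rw [Multiset.count_map]
        rw [Multiset.card_eq_zero]
        rw [Multiset.filter_eq_nil]
        intro x hx hgx
        exact hg ⟨x, hx, hgx.symm⟩
    rw [hmapeq]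
    constructor
    · exact hcnt
    · have htot := Multiset.toFinset_sum_count_eq (C.map Phi)
      have hcardE : Multiset.card (C.map Phi) = (p+1)! := by simp [hcard]
      have hconst : ∀ g ∈ (C.map Phi).toFinset, (C.map Phi).count g = (i-1)! := by
        intro g hg
        rcases hcnt g with h | h
        · exfalso
          have := Multiset.count_pos.mpr (Multiset.mem_toFinset.mp hg)
          omega
        · exact h
      rw [Finset.sum_congr rfl hconst, Finset.sum_const, smul_eq_mul, hcardE] at htot
      exact (Nat.div_eq_of_eq_mul_left (factorial_pos _) htot.symm).symm
end

section
/- Consider the triangle with vertices a, b, d, where each vertex has the colour list {1,2,3}, the conflict matchings on edges ab and ad are the identity (a colouring must satisfy c(a) ≠ c(b) and c(a) ≠ c(d)), and the matching on bd is any fixed permutation σ of {1,2,3} (a colouring must satisfy c(d) ≠ σ(c(b))). Then the 6 pairs (c(a), c(b)) with c(a) ≠ c(b) can each be extended by a choice of c(d) to a proper correspondence-colouring of the triangle, in such a way that the 6 resulting pairs (c(a), c(d)) are exactly the 6 pairs with c(a) ≠ c(d), each occurring once. -/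
private def stmt9E (σ : Equiv.Perm (Fin 3)) : Fin 3 × Fin 3 → Fin 3 :=
  fun x => if σ x.2 = x.2 ∨ σ (-(x.1+x.2)) = -(x.1+x.2) then -(x.1+x.2) else x.2

set_option synthInstance.maxSize 2000 in
set_option synthInstance.maxHeartbeats 1000000 in
set_option maxRecDepth 4000 in
private lemma stmt_9_aux (σ : Equiv.Perm (Fin 3)) :
      (∀ x : Fin 3 × Fin 3, x.1 ≠ x.2 → x.1 ≠ stmt9E σ x ∧ stmt9E σ x ≠ σ x.2) ∧
      (∀ x : Fin 3 × Fin 3, x.1 ≠ x.2 → x.1 ≠ stmt9E σ x) ∧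
      (∀ x₁ : Fin 3 × Fin 3, x₁.1 ≠ x₁.2 → ∀ x₂ : Fin 3 × Fin 3, x₂.1 ≠ x₂.2 →
        (x₁.1, stmt9E σ x₁) = (x₂.1, stmt9E σ x₂) → x₁ = x₂) ∧
      (∀ x : Fin 3 × Fin 3, x.1 ≠ x.2 → ∃ y : Fin 3 × Fin 3, y.1 ≠ y.2 ∧ (y.1, stmt9E σ y) = x) := by
  revert σ; decide

/-- Local extension step for pathwidth 2: the six pairs (c(a),c(b)) with
c(a) ≠ c(b) can each be extended by a colour c(d) respecting c(a) ≠ c(d) and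
c(d) ≠ σ(c(b)), so that the resulting pairs (c(a),c(d)) are exactly the six
pairs with distinct entries, each once (edge ad becomes balanced). -/
theorem stmt_9 (σ : Equiv.Perm (Fin 3)) :
    ∃ e : Fin 3 × Fin 3 → Fin 3,
      (∀ x : Fin 3 × Fin 3, x.1 ≠ x.2 → x.1 ≠ e x ∧ e x ≠ σ x.2) ∧
      Set.BijOn (fun x : Fin 3 × Fin 3 => (x.1, e x))
        {x : Fin 3 × Fin 3 | x.1 ≠ x.2} {x : Fin 3 × Fin 3 | x.1 ≠ x.2} := by
  obtain ⟨h1, h2, h3, h4⟩ := stmt_9_aux σ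
  refine ⟨stmt9E σ, h1, ?_, ?_, ?_⟩
  · exact fun x hx => h2 x hx
  · exact fun x₁ hx₁ x₂ hx₂ => h3 x₁ hx₁ x₂ hx₂
  · intro x hx
    obtain ⟨y, hy, hyx⟩ := h4 x hx
    exact ⟨y, hy, hyx⟩
end

section
/- Consider the triangle with vertices a, b, d, colour lists {1,2,3} at each vertex, identity conflict matchings on edges ab and ad, and an arbitrary fixed permutation σ of {1,2,3} as conflict matching on bd. Then the 6 pairs (c(a), c(b)) with c(a) ≠ c(b) can each be extended by a choice of c(d) to a proper correspondence-colouring of the triangle, in such a way that the 6 resulting pairs (c(b), c(d)) are exactly the 6 pairs with c(d) ≠ σ(c(b)), each occurring once. -/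
/-- Explicit choice of extension colour for the covered triangle. -/
def extColour (σ : Equiv.Perm (Fin 3)) (x : Fin 3 × Fin 3) : Fin 3 :=
  if σ x.2 = x.2 then -(x.1 + x.2)
  else if x.1 = σ x.2 then -(x.1 + x.2) else x.2

lemma extColour_prop (σ : Equiv.Perm (Fin 3)) :
    ∀ x : Fin 3 × Fin 3, x.1 ≠ x.2 →
      x.1 ≠ extColour σ x ∧ extColour σ x ≠ σ x.2 := by
  revert σ; decide

lemma extColour_inj (σ : Equiv.Perm (Fin 3)) :
    ∀ x : Fin 3 × Fin 3, x.1 ≠ x.2 → ∀ y : Fin 3 × Fin 3, y.1 ≠ y.2 →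
      x.2 = y.2 → extColour σ x = extColour σ y → x = y := by
  revert σ; decide

lemma extColour_surj (σ : Equiv.Perm (Fin 3)) :
    ∀ y : Fin 3 × Fin 3, y.2 ≠ σ y.1 →
      ∃ x : Fin 3 × Fin 3, x.1 ≠ x.2 ∧ x.2 = y.1 ∧ extColour σ x = y.2 := by
  revert σ; decide

/-- Local extension step, variant balancing the edge bd: the six pairs
(c(a),c(b)) with c(a) ≠ c(b) can each be extended by a colour c(d) with
c(a) ≠ c(d) and c(d) ≠ σ(c(b)), so that the resulting pairs (c(b),c(d)) are
exactly the six admissible pairs for the edge bd, each once. -/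
theorem stmt_10 (σ : Equiv.Perm (Fin 3)) :
    ∃ e : Fin 3 × Fin 3 → Fin 3,
      (∀ x : Fin 3 × Fin 3, x.1 ≠ x.2 → x.1 ≠ e x ∧ e x ≠ σ x.2) ∧
      Set.BijOn (fun x : Fin 3 × Fin 3 => (x.2, e x))
        {x : Fin 3 × Fin 3 | x.1 ≠ x.2} {y : Fin 3 × Fin 3 | y.2 ≠ σ y.1} := by
  refine ⟨extColour σ, extColour_prop σ, ?_, ?_, ?_⟩
  · intro x hx
    exact (extColour_prop σ x hx).2
  · intro x hx y hy hxy
    exact extColour_inj σ x hx y hy (congrArg Prod.fst hxy) (congrArg Prod.snd hxy)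
  · intro y hy
    obtain ⟨x, h1, h2, h3⟩ := extColour_surj σ y hy
    exact ⟨x, h1, by simp [h2, h3]⟩
end

section
/- Let G be a finite graph admitting a vertex partition V₁ ∪ V₂ ∪ … ∪ V_m such that every vertex in V_i has at most one neighbour in V₁ ∪ … ∪ V_{i−1} (for all 2 ≤ i ≤ m), and such that each induced subgraph G[V_i] has chromatic number at most t. Then G has chromatic number at most t + 1. -/
/-- Layering lemma (list-colouring shadow of the χ_c•-width lemma): if the
vertices are partitioned into layers (indexed by P) so that each vertex has at
most one neighbour in earlier layers and each layer is t-choosable, then the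
whole graph is (t+1)-choosable. -/
theorem stmt_13 {V : Type*} [Fintype V] [DecidableEq V]
    (G : SimpleGraph V) [DecidableRel G.Adj] (t : ℕ) (P : V → ℕ)
    (hback : ∀ v, ((G.neighborFinset v).filter (fun u => P u < P v)).card ≤ 1)
    (hlayer : ∀ i : ℕ, ∀ L : V → Finset ℕ, (∀ v, P v = i → (L v).card = t) →
      ∃ c : V → ℕ, (∀ v, P v = i → c v ∈ L v) ∧
        ∀ u v, P u = i → P v = i → G.Adj u v → c u ≠ c v) :
    ∀ L : V → Finset ℕ, (∀ v, (L v).card = t + 1) →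
      ∃ c : V → ℕ, (∀ v, c v ∈ L v) ∧ ∀ u v, G.Adj u v → c u ≠ c v := by
  classical
  intro L hL
  suffices h : ∀ k, ∃ c : V → ℕ, (∀ v, P v < k → c v ∈ L v) ∧
      ∀ u v, P u < k → P v < k → G.Adj u v → c u ≠ c v by
    obtain ⟨c, hc1, hc2⟩ := h ((Finset.univ.sup P) + 1)
    have hb : ∀ v : V, P v < Finset.univ.sup P + 1 := fun v =>
      Nat.lt_succ_of_le (Finset.le_sup (Finset.mem_univ v))
    exact ⟨c, fun v => hc1 v (hb v), fun u v h => hc2 u v (hb u) (hb v) h⟩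
  intro k
  induction k with
  | zero =>
      exact ⟨fun _ => 0, fun v h => absurd h (Nat.not_lt_zero _),
        fun u v hu => absurd hu (Nat.not_lt_zero _)⟩
  | succ k ih =>
      obtain ⟨c, hc1, hc2⟩ := ih
      set B : V → Finset ℕ :=
        fun v => ((G.neighborFinset v).filter (fun u => P u < P v)).image c with hBdef
      have hcard : ∀ v, P v = k → t ≤ (L v \ B v).card := by
        intro v hv
        have h1 : (B v).card ≤ 1 := le_trans Finset.card_image_le (hback v)
        have h2 := hL v
        have h3 := Finset.le_card_sdiff (B v) (L v)
        omega
      have hex : ∀ v, P v = k → ∃ s, s ⊆ L v \ B v ∧ s.card = t := fun v hv =>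
        Finset.exists_subset_card_eq (hcard v hv)
      choose! M hM1 hM2 using hex
      obtain ⟨c', hc'1, hc'2⟩ := hlayer k M hM2
      refine ⟨fun v => if P v = k then c' v else c v, ?_, ?_⟩
      · intro v hv
        by_cases hvk : P v = k
        · simp only [hvk, if_pos rfl]
          have := hM1 v hvk (hc'1 v hvk)
          exact (Finset.mem_sdiff.mp this).1
        · simp only [if_neg hvk]
          exact hc1 v (by omega)
      · intro u v hu hv hadj
        by_cases huk : P u = k <;> by_cases hvk : P v = k
        · simpa [huk, hvk] using hc'2 u v huk hvk hadj
        · simp only [if_pos huk, if_neg hvk]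
          have hcu : c' u ∈ L u \ B u := hM1 u huk (hc'1 u huk)
          have hmem : c v ∈ B u := by
            apply Finset.mem_image_of_mem
            simp only [Finset.mem_filter, SimpleGraph.mem_neighborFinset]
            exact ⟨hadj, by omega⟩
          intro heq
          exact (Finset.mem_sdiff.mp hcu).2 (heq ▸ hmem)
        · simp only [if_neg huk, if_pos hvk]
          have hcv : c' v ∈ L v \ B v := hM1 v hvk (hc'1 v hvk)
          have hmem : c u ∈ B v := by
            apply Finset.mem_image_of_mem
            simp only [Finset.mem_filter, SimpleGraph.mem_neighborFinset]
            exact ⟨hadj.symm, by omega⟩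
          intro heq
          exact (Finset.mem_sdiff.mp hcv).2 (heq ▸ hmem)
        · simp only [if_neg huk, if_neg hvk]
          exact hc2 u v (by omega) (by omega) hadj
end
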